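/- Let {S_i}_{i∈I} be a finite family of communicating systems over pairwise disjoint participant sets, let H = {h_i}_{i∈I} be a set of interfaces for it (no condition on mixed states), let CM be a connection model for H, and let K be a connection policy for H complying with CM. If every S_i (i ∈ I) is orphan-message free and K is orphan-message free, then the multicomposition MC({S_i}_{i∈I}, K) is orphan-message free. -/

import Mathlib

namespace CFSM

/-- Direction of a communication action: output (`!`) or input (`?`). -/
inductive Dir : Type where
  | out : Dir
  | inp : Dir
deriving DecidableEq

instance : Fintype Dir :=
  ⟨{Dir.out, Dir.inp}, fun x => by cases x <;> simp⟩

/-- An action `pq!a` (output) or `pq?a` (input) over participants `P` and messages `A`: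
`snd` is the sender `p`, `rcv` the receiver `q`, `msg` the message `a`. -/
structure Act (P : Type) (A : Type) : Type where
  snd : P
  rcv : P
  dir : Dir
  msg : A

instance {P A : Type} [Finite P] [Finite A] : Finite (Act P A) :=
  Finite.of_injective (fun l => (l.snd, l.rcv, l.dir, l.msg))
    (fun a b h => by
      cases a; cases b
      simp only [Prod.mk.injEq] at h
      obtain ⟨h1, h2, h3, h4⟩ := h
      subst h1; subst h2; subst h3; subst h4; rfl)

/-- The subject of an action: the sender of an output, the receiver of an input. -/
def Act.subject {P A : Type} (l : Act P A) : P :=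
  match l.dir with
  | .out => l.snd
  | .inp => l.rcv

/-- A communicating system over participants `P` and messages `A`:
one machine (state type, initial state and transition relation) per participant. -/
structure CS (P : Type) (A : Type) : Type 1 where
  St : P → Type
  init : ∀ p, St p
  delta : ∀ p, Set (St p × Act P A × St p)

/-- All actions of the machine of participant `p` have subject `p`
(the name of the machine) and distinct endpoints. -/
def CS.WellFormed {P A : Type} (S : CS P A) : Prop :=
  ∀ p t, t ∈ S.delta p → ((t.2.1 : Act P A).subject = p ∧ t.2.1.snd ≠ t.2.1.rcv)

/-- A configuration: a local state for each machine and a FIFO buffer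
for each ordered pair of participants. -/
structure Config {P A : Type} (S : CS P A) : Type where
  st : ∀ p, S.St p
  ch : P → P → List A

/-- The initial configuration: all machines in their initial state, all channels empty. -/
def CS.initConfig {P A : Type} (S : CS P A) : Config S :=
  ⟨S.init, fun _ _ => []⟩

/-- The labelled transition relation between configurations. -/
def StepL {P A : Type} (S : CS P A) (c : Config S) (l : Act P A) (c' : Config S) : Prop :=
  match l.dir with
  | .out =>
      (c.st l.snd, l, c'.st l.snd) ∈ S.delta l.snd ∧
      (∀ p, p ≠ l.snd → c'.st p = c.st p) ∧
      c'.ch l.snd l.rcv = c.ch l.snd l.rcv ++ [l.msg] ∧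
      (∀ p q, (p, q) ≠ (l.snd, l.rcv) → c'.ch p q = c.ch p q)
  | .inp =>
      (c.st l.rcv, l, c'.st l.rcv) ∈ S.delta l.rcv ∧
      (∀ p, p ≠ l.rcv → c'.st p = c.st p) ∧
      c.ch l.snd l.rcv = l.msg :: c'.ch l.snd l.rcv ∧
      (∀ p q, (p, q) ≠ (l.snd, l.rcv) → c'.ch p q = c.ch p q)

/-- Unlabelled transition relation. -/
def Step {P A : Type} (S : CS P A) (c c' : Config S) : Prop :=
  ∃ l, StepL S c l c'

/-- Reachability between configurations. -/
def Reach {P A : Type} (S : CS P A) : Config S → Config S → Prop :=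
  Relation.ReflTransGen (Step S)

/-- The set of configurations reachable from the initial configuration. -/
def RC {P A : Type} (S : CS P A) : Set (Config S) :=
  {c | Reach S S.initConfig c}

/-- A local state is final if it has no outgoing transition. -/
def FinalSt {Q P A : Type} (δ : Set (Q × Act P A × Q)) (q : Q) : Prop :=
  ∀ l q', (q, l, q') ∉ δ

/-- A local state is receiving if it is not final and all its outgoing
transitions are labelled with input actions. -/
def ReceivingSt {Q P A : Type} (δ : Set (Q × Act P A × Q)) (q : Q) : Prop :=
  (∃ l q', (q, l, q') ∈ δ) ∧ ∀ l q', (q, l, q') ∈ δ → (l : Act P A).dir = Dir.inp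

/-- A local state is mixed if it has at least one outgoing output-labelled
transition and at least one outgoing input-labelled transition. -/
def MixedSt {Q P A : Type} (δ : Set (Q × Act P A × Q)) (q : Q) : Prop :=
  (∃ l q', (q, l, q') ∈ δ ∧ (l : Act P A).dir = Dir.out) ∧
  (∃ l q', (q, l, q') ∈ δ ∧ (l : Act P A).dir = Dir.inp)

/-- A machine has no mixed states. -/
def NoMixed {Q P A : Type} (δ : Set (Q × Act P A × Q)) : Prop :=
  ∀ q, ¬ MixedSt δ q

/-- Deadlock configuration: all channels empty but all machines in receiving states. -/
def DeadlockConfig {P A : Type} (S : CS P A) (c : Config S) : Prop :=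
  (∀ p q, c.ch p q = []) ∧ ∀ p, ReceivingSt (S.delta p) (c.st p)

def DeadlockFree {P A : Type} (S : CS P A) : Prop :=
  ∀ c ∈ RC S, ¬ DeadlockConfig S c

/-- Orphan-message configuration: all machines final but some channel nonempty. -/
def OrphanConfig {P A : Type} (S : CS P A) (c : Config S) : Prop :=
  (∀ p, FinalSt (S.delta p) (c.st p)) ∧ ∃ p q, c.ch p q ≠ []

def OrphanFree {P A : Type} (S : CS P A) : Prop :=
  ∀ c ∈ RC S, ¬ OrphanConfig S c

/-- Unspecified reception configuration: some machine `r` is in a receiving state and,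
for every input transition of `r`, the corresponding channel is nonempty with a
first element different from the expected message. -/
def URConfig {P A : Type} (S : CS P A) (c : Config S) : Prop :=
  ∃ r, ReceivingSt (S.delta r) (c.st r) ∧
    ∀ s a q', (c.st r, Act.mk s r Dir.inp a, q') ∈ S.delta r →
      (c.ch s r ≠ [] ∧ ¬ ∃ w, c.ch s r = a :: w)

def ReceptionErrorFree {P A : Type} (S : CS P A) : Prop :=
  ∀ c ∈ RC S, ¬ URConfig S c

/-- Progress: every reachable configuration has an outgoing transition or all
machines are in final states. -/
def ProgressProp {P A : Type} (S : CS P A) : Prop :=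
  ∀ c ∈ RC S, (∃ c', Step S c c') ∨ ∀ p, FinalSt (S.delta p) (c.st p)

/-- `p`-lock configuration: `p` is in a receiving state and never occurs as the
subject of an action in any transition sequence from `c`. -/
def PLockConfig {P A : Type} (S : CS P A) (c : Config S) (p : P) : Prop :=
  ReceivingSt (S.delta p) (c.st p) ∧
  ∀ c1 l c2, Reach S c c1 → StepL S c1 l c2 → l.subject ≠ p

def LockFree {P A : Type} (S : CS P A) : Prop :=
  ∀ c ∈ RC S, ∀ p, ¬ PLockConfig S c p

section Composition

variable {I : Type} {P : I → Type} {A : Type}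

/-- Messages occurring in input actions of the machine of `p`. -/
def inMsgs {Pp A : Type} (S : CS Pp A) (p : Pp) : Set A :=
  {a | ∃ q s q', (q, Act.mk s p Dir.inp a, q') ∈ S.delta p}

/-- Messages occurring in output actions of the machine of `p`. -/
def outMsgs {Pp A : Type} (S : CS Pp A) (p : Pp) : Set A :=
  {a | ∃ q r q', (q, Act.mk p r Dir.out a, q') ∈ S.delta p}

/-- `CM` is a connection model for the interfaces `hh i` of the family `S`
(the interface `h_i` is represented by its index `i`). -/
def IsConnModel (S : ∀ i, CS (P i) A) (hh : ∀ i, P i) (CM : Set (I × A × I)) : Prop :=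
  ∀ i a,
    (a ∈ inMsgs (S i) (hh i) →
      ∃ j, j ≠ i ∧ a ∈ outMsgs (S j) (hh j) ∧ (i, a, j) ∈ CM) ∧
    (a ∈ outMsgs (S i) (hh i) →
      ∃ j, j ≠ i ∧ a ∈ inMsgs (S j) (hh j) ∧ (j, a, i) ∈ CM)

/-- `CM` is a strong connection model: additionally the connecting partner is unique. -/
def IsStrongConnModel (S : ∀ i, CS (P i) A) (hh : ∀ i, P i) (CM : Set (I × A × I)) : Prop :=
  IsConnModel S hh CM ∧
  ∀ i a,
    (a ∈ inMsgs (S i) (hh i) → ∃! j, (i, a, j) ∈ CM) ∧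
    (a ∈ outMsgs (S i) (hh i) → ∃! j, (j, a, i) ∈ CM)

/-- Conditions (*) and (**) for a candidate transition relation `d` of the local
connection policy of interface `hh i` (the name `k_i` is represented by `i`). -/
def PolicySat (S : ∀ i, CS (P i) A) (hh : ∀ i, P i) (CM : Set (I × A × I)) (i : I)
    (d : Set ((S i).St (hh i) × Act I A × (S i).St (hh i))) : Prop :=
  (∀ q r a q', (q, Act.mk r (hh i) Dir.inp a, q') ∈ (S i).delta (hh i) →
      ∃ j, j ≠ i ∧ (i, a, j) ∈ CM ∧ (q, Act.mk i j Dir.out a, q') ∈ d) ∧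
  (∀ q r a q', (q, Act.mk (hh i) r Dir.out a, q') ∈ (S i).delta (hh i) →
      ∃ j, j ≠ i ∧ (j, a, i) ∈ CM ∧ (q, Act.mk j i Dir.inp a, q') ∈ d)

/-- `d` belongs to the local connection policy set `IS(M_{h_i}, CM)`:
it is a minimal relation satisfying (*) and (**).  (The states `q̇` of the
policy machine are identified with the states `q` of `M_{h_i}`.) -/
def InIS (S : ∀ i, CS (P i) A) (hh : ∀ i, P i) (CM : Set (I × A × I)) (i : I)
    (d : Set ((S i).St (hh i) × Act I A × (S i).St (hh i))) : Prop :=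
  PolicySat S hh CM i d ∧ ∀ d', d' ⊆ d → PolicySat S hh CM i d' → d' = d

/-- The communicating system (over the participant type `I` of names `k_i`)
determined by the family of transition relations `Kd` of a connection policy. -/
def policyCS (S : ∀ i, CS (P i) A) (hh : ∀ i, P i)
    (Kd : ∀ i, Set ((S i).St (hh i) × Act I A × (S i).St (hh i))) : CS I A where
  St := fun i => (S i).St (hh i)
  init := fun i => (S i).init (hh i)
  delta := Kd

/-- `Kd` is a connection policy for the interfaces `hh` complying with `CM`. -/
def IsConnPolicy (S : ∀ i, CS (P i) A) (hh : ∀ i, P i) (CM : Set (I × A × I))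
    (Kd : ∀ i, Set ((S i).St (hh i) × Act I A × (S i).St (hh i))) : Prop :=
  ∀ i, InIS S hh CM i (Kd i)

/-- States of the gateway for interface `hh i`: the original states plus one
fresh state per transition of `M_{h_i}`. -/
abbrev GWState (S : ∀ i, CS (P i) A) (hh : ∀ i, P i) (i : I) : Type :=
  (S i).St (hh i) ⊕ ((S i).St (hh i) × Act (P i) A × (S i).St (hh i))

/-- Lifting of a local action of system `i` to the composed participant type. -/
def liftAct (i : I) (l : Act (P i) A) : Act ((j : I) × P j) A :=
  Act.mk ⟨i, l.snd⟩ ⟨i, l.rcv⟩ l.dir l.msg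

/-- Transition relation of the gateway `M_{h_i} ⟲ M_{k_i}`. -/
def GWdelta (S : ∀ i, CS (P i) A) (hh : ∀ i, P i)
    (Kd : ∀ i, Set ((S i).St (hh i) × Act I A × (S i).St (hh i))) (i : I) :
    Set (GWState S hh i × Act ((j : I) × P j) A × GWState S hh i) :=
  {x | ∃ q a q',
    (∃ s r, (q, Act.mk (hh i) s Dir.out a, q') ∈ (S i).delta (hh i) ∧
        (q, Act.mk r i Dir.inp a, q') ∈ Kd i ∧
        (x = (Sum.inl q, Act.mk ⟨r, hh r⟩ ⟨i, hh i⟩ Dir.inp a,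
              Sum.inr (q, Act.mk (hh i) s Dir.out a, q')) ∨
         x = (Sum.inr (q, Act.mk (hh i) s Dir.out a, q'),
              Act.mk ⟨i, hh i⟩ ⟨i, s⟩ Dir.out a, Sum.inl q'))) ∨
    (∃ s r, (q, Act.mk s (hh i) Dir.inp a, q') ∈ (S i).delta (hh i) ∧
        (q, Act.mk i r Dir.out a, q') ∈ Kd i ∧
        (x = (Sum.inl q, Act.mk ⟨i, s⟩ ⟨i, hh i⟩ Dir.inp a,
              Sum.inr (q, Act.mk s (hh i) Dir.inp a, q')) ∨
         x = (Sum.inr (q, Act.mk s (hh i) Dir.inp a, q'),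
              Act.mk ⟨i, hh i⟩ ⟨r, hh r⟩ Dir.out a, Sum.inl q')))}

open Classical in
/-- State type of the machine of participant `⟨i, p⟩` in the multicomposition:
the gateway state type if `p` is the interface of system `i`, the original
state type otherwise. -/
noncomputable def MCSt (S : ∀ i, CS (P i) A) (hh : ∀ i, P i) (x : (i : I) × P i) : Type :=
  if x.2 = hh x.1 then GWState S hh x.1 else (S x.1).St x.2

/-- The multicomposition `MC({S_i}, K)`: all machines of the single systems,
with the machine of each interface `hh i` replaced by its gateway. -/
noncomputable def MC (S : ∀ i, CS (P i) A) (hh : ∀ i, P i)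
    (Kd : ∀ i, Set ((S i).St (hh i) × Act I A × (S i).St (hh i))) :
    CS ((i : I) × P i) A where
  St := MCSt S hh
  init := fun x => by
    by_cases hp : x.2 = hh x.1
    · have h : MCSt S hh x = GWState S hh x.1 := by simp [MCSt, hp]
      rw [h]; exact Sum.inl ((S x.1).init (hh x.1))
    · have h : MCSt S hh x = (S x.1).St x.2 := by simp [MCSt, hp]
      rw [h]; exact (S x.1).init x.2
  delta := fun x => by
    by_cases hp : x.2 = hh x.1
    · have h : MCSt S hh x = GWState S hh x.1 := by simp [MCSt, hp]
      rw [h]; exact GWdelta S hh Kd x.1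
    · have h : MCSt S hh x = (S x.1).St x.2 := by simp [MCSt, hp]
      rw [h]
      exact {t | ∃ q l q', (q, l, q') ∈ (S x.1).delta x.2 ∧ t = (q, liftAct x.1 l, q')}

/-- The state of the gateway of interface `hh i` in a configuration of the
multicomposition, as an element of `GWState`. -/
noncomputable def toGW (S : ∀ i, CS (P i) A) (hh : ∀ i, P i) (i : I)
    (x : MCSt S hh ⟨i, hh i⟩) : GWState S hh i :=
  cast (by simp [MCSt]) x

/-- The state of a non-interface participant in a configuration of the
multicomposition, as an element of its original state type. -/
noncomputable def toLoc (S : ∀ i, CS (P i) A) (hh : ∀ i, P i) {i : I} {p : P i}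
    (hp : p ≠ hh i) (x : MCSt S hh ⟨i, p⟩) : (S i).St p :=
  cast (by simp [MCSt, hp]) x

/-- Projection of a configuration of the multicomposition to system `S i`,
assuming the gateway state of `hh i` is not a fresh intermediate state
(i.e. it is of the form `Sum.inl q`). -/
noncomputable def projSys (S : ∀ i, CS (P i) A) (hh : ∀ i, P i)
    (Kd : ∀ i, Set ((S i).St (hh i) × Act I A × (S i).St (hh i)))
    (i : I) (s : Config (MC S hh Kd))
    (hq : ∃ q, toGW S hh i (s.st ⟨i, hh i⟩) = Sum.inl q) : Config (S i) where
  st := fun p => by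
    by_cases hp : p = hh i
    · rw [hp]; exact hq.choose
    · exact toLoc S hh hp (s.st ⟨i, p⟩)
  ch := fun p q => s.ch ⟨i, p⟩ ⟨i, q⟩

/-- Projection of a configuration of the multicomposition to the connection
policy `K`, assuming no gateway is in a fresh intermediate state. -/
noncomputable def projPolicy (S : ∀ i, CS (P i) A) (hh : ∀ i, P i)
    (Kd : ∀ i, Set ((S i).St (hh i) × Act I A × (S i).St (hh i)))
    (s : Config (MC S hh Kd))
    (hq : ∀ i, ∃ q, toGW S hh i (s.st ⟨i, hh i⟩) = Sum.inl q) :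
    Config (policyCS S hh Kd) where
  st := fun i => (hq i).choose
  ch := fun i j => s.ch ⟨i, hh i⟩ ⟨j, hh j⟩

end Composition

end CFSM

/-! Seen from a single system `S i`, every step of the multicomposition is a step of `S i` or
leaves its projection unchanged, and the same holds seen from the policy `K`: a gateway
transition is one half of a forwarding and acts on exactly one of the two sides. Hence the
projections of a reachable configuration are reachable. Moreover channels between different
systems only ever carry messages between interfaces. In an orphan-message configuration no
gateway is halfway through a forwarding, so every gateway rests in a final state of `M_{h_i}`,
which by minimality of the policy is final for `K` as well; the nonempty channel then lies
inside some `S i` or between two interfaces, and the corresponding projection is an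
orphan-message configuration. -/

namespace CFSM

section General

variable {P A : Type} {S : CS P A}

theorem Act.subject_eq_snd_or_rcv (l : Act P A) : l.subject = l.snd ∨ l.subject = l.rcv := by
  unfold Act.subject; cases l.dir <;> simp

theorem Config.ext {c d : Config S} (hst : c.st = d.st) (hch : c.ch = d.ch) : c = d := by
  cases c; cases d; cases hst; cases hch; rfl

namespace StepL

variable {c c' : Config S} {l : Act P A}

theorem mem_delta (h : StepL S c l c') :
    (c.st l.subject, l, c'.st l.subject) ∈ S.delta l.subject := by
  obtain ⟨s, r, d, a⟩ := l; cases d <;> exact h.1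

theorem st_eq (h : StepL S c l c') {p : P} (hp : p ≠ l.subject) : c'.st p = c.st p := by
  obtain ⟨s, r, d, a⟩ := l; cases d <;> exact h.2.1 p hp

theorem ch_eq (h : StepL S c l c') {p q : P} (hpq : (p, q) ≠ (l.snd, l.rcv)) :
    c'.ch p q = c.ch p q := by
  obtain ⟨s, r, d, a⟩ := l; cases d <;> exact h.2.2.2 p q hpq

theorem ch_eq_of_ne_subject (h : StepL S c l c') {p q : P} (hp : p ≠ l.subject)
    (hq : q ≠ l.subject) : c'.ch p q = c.ch p q := by
  refine h.ch_eq fun hpq => ?_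
  obtain ⟨rfl, rfl⟩ := Prod.mk.inj hpq
  rcases l.subject_eq_snd_or_rcv with e | e
  · exact hp e.symm
  · exact hq e.symm

/-- A step of `S` whose channels and acting machine are seen through an injective renaming
`e` of participants is a step of `T`. -/
theorem comap {P' : Type} {T : CS P' A} {e : P' → P} (he : Function.Injective e)
    (h : StepL S c l c') {d d' : Config T} {l' : Act P' A} {p' : P'}
    (hl : l = ⟨e l'.snd, e l'.rcv, l'.dir, l'.msg⟩) (hsub : l'.subject = p')
    (hch : ∀ p q, d.ch p q = c.ch (e p) (e q)) (hch' : ∀ p q, d'.ch p q = c'.ch (e p) (e q))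
    (hδ : (d.st p', l', d'.st p') ∈ T.delta p') (hst : ∀ p, p ≠ p' → d'.st p = d.st p) :
    StepL T d l' d' := by
  subst hl hsub
  have hne : ∀ p q, (p, q) ≠ (l'.snd, l'.rcv) → (e p, e q) ≠ (e l'.snd, e l'.rcv) :=
    fun p q hpq he' => hpq (by simp_all [he.eq_iff])
  obtain ⟨s, r, dir, a⟩ := l'
  cases dir
  · obtain ⟨-, -, hout, hframe⟩ := h
    refine ⟨hδ, hst, ?_, fun p q hpq => ?_⟩
    · simpa [hch, hch'] using hout
    · rw [hch, hch']; exact hframe _ _ (hne p q hpq)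
  · obtain ⟨-, -, hin, hframe⟩ := h
    refine ⟨hδ, hst, ?_, fun p q hpq => ?_⟩
    · simpa [hch, hch'] using hin
    · rw [hch, hch']; exact hframe _ _ (hne p q hpq)

end StepL

theorem ch_rel_of_mem_RC (R : P → P → Prop)
    (hR : ∀ p q l q', (q, l, q') ∈ S.delta p → R l.snd l.rcv)
    {c : Config S} (hc : c ∈ RC S) {p q : P} (hne : c.ch p q ≠ []) : R p q := by
  induction hc with
  | refl => exact absurd rfl hne
  | tail _ hstep ih =>
    obtain ⟨l, hl⟩ := hstep
    by_cases hpq : (p, q) = (l.snd, l.rcv)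
    · obtain ⟨rfl, rfl⟩ := Prod.mk.inj hpq
      exact hR _ _ _ _ hl.mem_delta
    · exact ih (by rwa [hl.ch_eq hpq] at hne)

theorem st_eq_init_or_target_of_mem_RC {c : Config S} (hc : c ∈ RC S) (p : P) :
    c.st p = S.init p ∨ ∃ q l, (q, l, c.st p) ∈ S.delta p := by
  induction hc with
  | refl => exact Or.inl rfl
  | @tail c c' _ hstep ih =>
    obtain ⟨l, hl⟩ := hstep
    by_cases hp : p = l.subject
    · subst hp; exact Or.inr ⟨_, _, hl.mem_delta⟩
    · rw [hl.st_eq hp]; exact ih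

theorem map_mem_RC {P' : Type} {T : CS P' A} (f : Config S → Config T)
    (hinit : f S.initConfig = T.initConfig)
    (hstep : ∀ c l c', StepL S c l c' → Relation.ReflTransGen (Step T) (f c) (f c'))
    {c : Config S} (hc : c ∈ RC S) : f c ∈ RC T := by
  have : Relation.ReflTransGen (Step T) (f S.initConfig) (f c) :=
    Relation.ReflTransGen.lift' f (fun c c' ⟨l, hl⟩ => hstep c l c' hl) _ _ hc
  rwa [hinit] at this

end General

section Composition

variable {I : Type} {P : I → Type} {A : Type} {S : ∀ i, CS (P i) A} {hh : ∀ i, P i}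
  {CM : Set (I × A × I)} {Kd : ∀ i, Set ((S i).St (hh i) × Act I A × (S i).St (hh i))}

theorem InIS.mem_cases {i : I} {d : Set ((S i).St (hh i) × Act I A × (S i).St (hh i))}
    (hd : InIS S hh CM i d) {t : (S i).St (hh i) × Act I A × (S i).St (hh i)} (ht : t ∈ d) :
    (∃ r a j, t.2.1 = ⟨i, j, .out, a⟩ ∧ j ≠ i ∧
        (t.1, ⟨r, hh i, .inp, a⟩, t.2.2) ∈ (S i).delta (hh i)) ∨
    (∃ r a j, t.2.1 = ⟨j, i, .inp, a⟩ ∧ j ≠ i ∧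
        (t.1, ⟨hh i, r, .out, a⟩, t.2.2) ∈ (S i).delta (hh i)) := by
  by_contra hnot
  have hsat : PolicySat S hh CM i (d \ {t}) := by
    constructor
    · intro q r a q' hq
      obtain ⟨j, hji, hcm, hmem⟩ := hd.1.1 q r a q' hq
      refine ⟨j, hji, hcm, hmem, fun e => hnot ?_⟩
      subst e; exact Or.inl ⟨r, a, j, rfl, hji, hq⟩
    · intro q r a q' hq
      obtain ⟨j, hji, hcm, hmem⟩ := hd.1.2 q r a q' hq
      refine ⟨j, hji, hcm, hmem, fun e => hnot ?_⟩
      subst e; exact Or.inr ⟨r, a, j, rfl, hji, hq⟩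
  rw [← hd.2 _ Set.sdiff_subset hsat] at ht
  exact ht.2 rfl

theorem IsConnPolicy.wellFormed (hK : IsConnPolicy S hh CM Kd) :
    (policyCS S hh Kd).WellFormed := by
  intro i t ht
  rcases (hK i).mem_cases ht with ⟨r, a, j, hl, hji, -⟩ | ⟨r, a, j, hl, hji, -⟩
  · simpa [hl, Act.subject] using hji.symm
  · simpa [hl, Act.subject] using hji

theorem IsConnPolicy.finalSt (hK : IsConnPolicy S hh CM Kd) {i : I} {q : (S i).St (hh i)}
    (hq : FinalSt ((S i).delta (hh i)) q) : FinalSt (Kd i) q := by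
  intro l q' ht
  rcases (hK i).mem_cases ht with ⟨_, _, _, -, -, hδ⟩ | ⟨_, _, _, -, -, hδ⟩ <;>
    exact hq _ _ hδ

theorem mem_mpr_set_iff {α β X : Type} (h : β = α)
    (h' : Set (β × X × β) = Set (α × X × α))
    (s : Set (α × X × α)) (t : β × X × β) :
    t ∈ h'.mpr s ↔ (cast h t.1, t.2.1, cast h t.2.2) ∈ s := by
  subst h; rfl

theorem mem_MC_delta_gw_iff {i : I} {a b : MCSt S hh ⟨i, hh i⟩} {l : Act ((j : I) × P j) A} :
    (a, l, b) ∈ (MC S hh Kd).delta ⟨i, hh i⟩ ↔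
      (toGW S hh i a, l, toGW S hh i b) ∈ GWdelta S hh Kd i := by
  unfold MC; dsimp only; rw [dif_pos rfl]
  exact mem_mpr_set_iff (by simp [MCSt]) _ _ _

theorem mem_MC_delta_iff_of_ne {i : I} {p : P i} (hp : p ≠ hh i) {a b : MCSt S hh ⟨i, p⟩}
    {l : Act ((j : I) × P j) A} :
    (a, l, b) ∈ (MC S hh Kd).delta ⟨i, p⟩ ↔
      ∃ l', (toLoc S hh hp a, l', toLoc S hh hp b) ∈ (S i).delta p ∧ l = liftAct i l' := by
  unfold MC; dsimp only; rw [dif_neg hp, mem_mpr_set_iff (by simp [MCSt, hp])]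
  simp [toLoc, eq_comm]

theorem toGW_MC_init (i : I) :
    toGW S hh i ((MC S hh Kd).init ⟨i, hh i⟩) = .inl ((S i).init (hh i)) := by
  unfold MC; dsimp only; rw [dif_pos rfl]
  simp [toGW]

theorem toLoc_MC_init {i : I} {p : P i} (hp : p ≠ hh i) :
    toLoc S hh hp ((MC S hh Kd).init ⟨i, p⟩) = (S i).init p := by
  unfold MC; dsimp only; rw [dif_neg hp]
  simp [toLoc]

theorem toGW_surjective (i : I) : Function.Surjective (toGW S hh i) :=
  fun g => ⟨cast (by simp [MCSt]) g, by simp [toGW]⟩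

theorem toLoc_surjective {i : I} {p : P i} (hp : p ≠ hh i) :
    Function.Surjective (toLoc S hh hp) :=
  fun q => ⟨cast (by simp [MCSt, hp]) q, by simp [toLoc]⟩

theorem FinalSt.toGW {i : I} {x : MCSt S hh ⟨i, hh i⟩}
    (hx : FinalSt ((MC S hh Kd).delta ⟨i, hh i⟩) x) :
    FinalSt (GWdelta S hh Kd i) (toGW S hh i x) := by
  intro l g' hg'
  obtain ⟨y, rfl⟩ := toGW_surjective (S := S) (hh := hh) i g'
  exact hx l y (mem_MC_delta_gw_iff.2 hg')

theorem FinalSt.toLoc {i : I} {p : P i} (hp : p ≠ hh i) {x : MCSt S hh ⟨i, p⟩}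
    (hx : FinalSt ((MC S hh Kd).delta ⟨i, p⟩) x) :
    FinalSt ((S i).delta p) (toLoc S hh hp x) := by
  intro l q' hq'
  obtain ⟨y, rfl⟩ := toLoc_surjective (S := S) hp q'
  exact hx _ y ((mem_MC_delta_iff_of_ne hp).2 ⟨l, hq', rfl⟩)

/-- In an intermediate state the gateway has performed one half of a forwarding: the half
facing `S i` for a forwarded input, the half facing the policy for a forwarded output. -/
def gwSysState {i : I} : GWState S hh i → (S i).St (hh i)
  | .inl q => q
  | .inr (q, l, q') => match l.dir with | .out => q | .inp => q'

def gwPolicyState {i : I} : GWState S hh i → (S i).St (hh i)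
  | .inl q => q
  | .inr (q, l, q') => match l.dir with | .out => q' | .inp => q

variable (hh) in
def liftPolicyAct (l : Act I A) : Act ((j : I) × P j) A :=
  ⟨⟨l.snd, hh l.snd⟩, ⟨l.rcv, hh l.rcv⟩, l.dir, l.msg⟩

theorem liftAct_subject (i : I) (l : Act (P i) A) : (liftAct i l).subject = ⟨i, l.subject⟩ := by
  obtain ⟨s, r, d, a⟩ := l; cases d <;> rfl

theorem liftPolicyAct_subject (l : Act I A) :
    (liftPolicyAct hh l).subject = ⟨l.subject, hh l.subject⟩ := by
  obtain ⟨s, r, d, a⟩ := l; cases d <;> rfl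

theorem mem_GWdelta_cases {i : I} {g g' : GWState S hh i} {l : Act ((j : I) × P j) A}
    (h : (g, l, g') ∈ GWdelta S hh Kd i) :
    (∃ l', (gwSysState g, l', gwSysState g') ∈ (S i).delta (hh i) ∧ l = liftAct i l' ∧
        gwPolicyState g' = gwPolicyState g) ∨
    (∃ l', (gwPolicyState g, l', gwPolicyState g') ∈ Kd i ∧ l = liftPolicyAct hh l' ∧
        gwSysState g' = gwSysState g) := by
  obtain ⟨q, a, q', ⟨s, r, hδ, hK, h | h⟩ | ⟨s, r, hδ, hK, h | h⟩⟩ := h <;>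
    simp only [Prod.mk.injEq] at h <;> obtain ⟨rfl, rfl, rfl⟩ := h
  · exact Or.inr ⟨_, hK, rfl, rfl⟩
  · exact Or.inl ⟨_, hδ, rfl, rfl⟩
  · exact Or.inl ⟨_, hδ, rfl, rfl⟩
  · exact Or.inr ⟨_, hK, rfl, rfl⟩

theorem exists_mem_GWdelta_of_inr {i : I} {g : GWState S hh i} {l : Act ((j : I) × P j) A}
    {t : (S i).St (hh i) × Act (P i) A × (S i).St (hh i)}
    (h : (g, l, .inr t) ∈ GWdelta S hh Kd i) :
    ∃ l' g', (.inr t, l', g') ∈ GWdelta S hh Kd i := by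
  obtain ⟨q, a, q', ⟨s, r, hδ, hK, h | h⟩ | ⟨s, r, hδ, hK, h | h⟩⟩ := h <;>
    simp only [Prod.mk.injEq, reduceCtorEq, and_false] at h
  · exact ⟨_, _, q, a, q', Or.inl ⟨s, r, hδ, hK, Or.inr (by rw [h.2.2])⟩⟩
  · exact ⟨_, _, q, a, q', Or.inr ⟨s, r, hδ, hK, Or.inr (by rw [h.2.2])⟩⟩

open Classical in
noncomputable def sysState (i : I) (p : P i) (x : MCSt S hh ⟨i, p⟩) : (S i).St p :=
  if hp : p = hh i then
    cast (congrArg (S i).St hp.symm) (gwSysState (toGW S hh i (cast (by rw [hp]) x)))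
  else toLoc S hh hp x

theorem sysState_hh (i : I) (x : MCSt S hh ⟨i, hh i⟩) :
    sysState i (hh i) x = gwSysState (toGW S hh i x) := by
  simp [sysState]

theorem sysState_of_ne {i : I} {p : P i} (hp : p ≠ hh i) (x : MCSt S hh ⟨i, p⟩) :
    sysState i p x = toLoc S hh hp x :=
  dif_neg hp

theorem mem_MC_delta_sysState_cases {i : I} {p : P i} {a b : MCSt S hh ⟨i, p⟩}
    {l : Act ((j : I) × P j) A} (h : (a, l, b) ∈ (MC S hh Kd).delta ⟨i, p⟩) :
    (∃ l', (sysState i p a, l', sysState i p b) ∈ (S i).delta p ∧ l = liftAct i l') ∨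
    (sysState i p b = sysState i p a ∧
      ∃ q l' q', (q, l', q') ∈ Kd i ∧ l = liftPolicyAct hh l') := by
  by_cases hp : p = hh i
  · subst hp
    simp only [sysState_hh]
    rcases mem_GWdelta_cases (mem_MC_delta_gw_iff.1 h) with
      ⟨l', hl', hl, -⟩ | ⟨l', hl', hl, hst⟩
    · exact Or.inl ⟨l', hl', hl⟩
    · exact Or.inr ⟨hst, _, l', _, hl', hl⟩
  · simp only [sysState_of_ne hp]
    exact Or.inl ((mem_MC_delta_iff_of_ne hp).1 h)

theorem MC_delta_label_cases {x : (i : I) × P i} {a b : MCSt S hh x} {l : Act ((j : I) × P j) A}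
    (h : (a, l, b) ∈ (MC S hh Kd).delta x) :
    l.snd.1 = l.rcv.1 ∨ (l.snd.2 = hh l.snd.1 ∧ l.rcv.2 = hh l.rcv.1) := by
  obtain ⟨i, p⟩ := x
  rcases mem_MC_delta_sysState_cases h with ⟨l', -, rfl⟩ | ⟨-, _, l', _, -, rfl⟩
  · exact Or.inl rfl
  · exact Or.inr ⟨rfl, rfl⟩

variable (S hh Kd) in
noncomputable def sysConfig (c : Config (MC S hh Kd)) (i : I) : Config (S i) :=
  ⟨fun p => sysState i p (c.st ⟨i, p⟩), fun p q => c.ch ⟨i, p⟩ ⟨i, q⟩⟩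

variable (S hh Kd) in
noncomputable def policyConfig (c : Config (MC S hh Kd)) : Config (policyCS S hh Kd) :=
  ⟨fun i => gwPolicyState (toGW S hh i (c.st ⟨i, hh i⟩)),
    fun i j => c.ch ⟨i, hh i⟩ ⟨j, hh j⟩⟩

theorem sysConfig_initConfig (i : I) :
    sysConfig S hh Kd (MC S hh Kd).initConfig i = (S i).initConfig := by
  refine Config.ext (funext fun p => ?_) rfl
  by_cases hp : p = hh i
  · subst hp; exact (sysState_hh i _).trans (congrArg gwSysState (toGW_MC_init (Kd := Kd) i))
  · exact (sysState_of_ne hp _).trans (toLoc_MC_init (Kd := Kd) hp)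

theorem policyConfig_initConfig :
    policyConfig S hh Kd (MC S hh Kd).initConfig = (policyCS S hh Kd).initConfig :=
  Config.ext (funext fun i => congrArg gwPolicyState (toGW_MC_init (Kd := Kd) i)) rfl

theorem sysConfig_step (hK : IsConnPolicy S hh CM Kd) {c c' : Config (MC S hh Kd)}
    {l : Act ((j : I) × P j) A} (h : StepL (MC S hh Kd) c l c') (i : I) :
    Relation.ReflTransGen (Step (S i)) (sysConfig S hh Kd c i) (sysConfig S hh Kd c' i) := by
  obtain ⟨⟨j, p⟩, hx⟩ : ∃ x, l.subject = x := ⟨_, rfl⟩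
  have hδ := h.mem_delta
  rw [hx] at hδ
  by_cases hji : j = i
  · subst hji
    rcases mem_MC_delta_sysState_cases hδ with ⟨l', hl', rfl⟩ | ⟨hst, _, l', _, hl', rfl⟩
    · refine .single ⟨l', h.comap sigma_mk_injective rfl ?_ (fun _ _ => rfl) (fun _ _ => rfl) hl'
        fun p' hp' => ?_⟩
      · rw [liftAct_subject] at hx; exact sigma_mk_injective hx
      · exact congrArg (sysState j p') (h.st_eq (by rw [hx]; simpa using hp'))
    · have hne := (hK.wellFormed j _ hl').2
      convert Relation.ReflTransGen.refl using 1
      refine Config.ext (funext fun p' => ?_) (funext₂ fun p' q' => h.ch_eq ?_)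
      · by_cases hp' : p' = p
        · subst hp'; exact hst
        · exact congrArg (sysState j p') (h.st_eq (by rw [hx]; simpa using hp'))
      · intro he
        simp only [liftPolicyAct, Prod.mk.injEq, Sigma.mk.injEq] at he
        exact hne (he.1.1.symm.trans he.2.1)
  · convert Relation.ReflTransGen.refl using 1
    have hne : ∀ p' : P i, (⟨i, p'⟩ : (k : I) × P k) ≠ l.subject := by
      rw [hx]; exact fun p' he => hji (congrArg Sigma.fst he).symm
    exact Config.ext (funext fun p' => congrArg (sysState i p') (h.st_eq (hne p')))
      (funext₂ fun p' q' => h.ch_eq_of_ne_subject (hne p') (hne q'))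

theorem policyConfig_step (hwf : ∀ i, (S i).WellFormed) {c c' : Config (MC S hh Kd)}
    {l : Act ((j : I) × P j) A} (h : StepL (MC S hh Kd) c l c') :
    Relation.ReflTransGen (Step (policyCS S hh Kd))
      (policyConfig S hh Kd c) (policyConfig S hh Kd c') := by
  obtain ⟨⟨i, p⟩, hx⟩ : ∃ x, l.subject = x := ⟨_, rfl⟩
  have hδ := h.mem_delta
  rw [hx] at hδ
  have hst_eq : ∀ j, (⟨j, hh j⟩ : (k : I) × P k) ≠ l.subject →
      (policyConfig S hh Kd c').st j = (policyConfig S hh Kd c).st j :=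
    fun j hj => congrArg (fun x => gwPolicyState (toGW S hh j x)) (h.st_eq hj)
  by_cases hp : p = hh i
  · subst hp
    have hne_i : ∀ j, j ≠ i → (⟨j, hh j⟩ : (k : I) × P k) ≠ l.subject := by
      rw [hx]; exact fun j hj he => hj (congrArg Sigma.fst he)
    rcases mem_GWdelta_cases (mem_MC_delta_gw_iff.1 hδ) with
      ⟨l', hl', rfl, hst⟩ | ⟨l', hl', rfl, -⟩
    · have hne := (hwf i _ _ hl').2
      convert Relation.ReflTransGen.refl using 1
      refine Config.ext (funext fun j => ?_) (funext₂ fun j j' => h.ch_eq ?_)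
      · by_cases hj : j = i
        · subst hj; exact hst
        · exact hst_eq j (hne_i j hj)
      · intro he
        simp only [liftAct, Prod.mk.injEq, Sigma.mk.injEq] at he
        obtain ⟨⟨rfl, h1⟩, ⟨rfl, h2⟩⟩ := he
        exact hne ((eq_of_heq h1).symm.trans (eq_of_heq h2))
    · refine .single ⟨l', h.comap (fun j j' he => congrArg Sigma.fst he) rfl ?_
        (fun _ _ => rfl) (fun _ _ => rfl) hl' fun j hj => hst_eq j (hne_i j hj)⟩
      rw [liftPolicyAct_subject] at hx; exact congrArg Sigma.fst hx
  · have hne : ∀ j, (⟨j, hh j⟩ : (k : I) × P k) ≠ l.subject := by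
      rw [hx]; rintro j he; cases he; exact hp rfl
    convert Relation.ReflTransGen.refl using 1
    exact Config.ext (funext fun j => hst_eq j (hne j))
      (funext₂ fun j j' => h.ch_eq_of_ne_subject (hne j) (hne j'))

theorem sysConfig_mem_RC (hK : IsConnPolicy S hh CM Kd) {c : Config (MC S hh Kd)}
    (hc : c ∈ RC (MC S hh Kd)) (i : I) : sysConfig S hh Kd c i ∈ RC (S i) :=
  map_mem_RC (sysConfig S hh Kd · i) (sysConfig_initConfig i)
    (fun _ _ _ h => sysConfig_step hK h i) hc

theorem policyConfig_mem_RC (hwf : ∀ i, (S i).WellFormed) {c : Config (MC S hh Kd)}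
    (hc : c ∈ RC (MC S hh Kd)) : policyConfig S hh Kd c ∈ RC (policyCS S hh Kd) :=
  map_mem_RC _ policyConfig_initConfig (fun _ _ _ h => policyConfig_step hwf h) hc

theorem MC_ch_ne_nil_cases {c : Config (MC S hh Kd)} (hc : c ∈ RC (MC S hh Kd))
    {x y : (i : I) × P i} (hxy : c.ch x y ≠ []) :
    x.1 = y.1 ∨ (x.2 = hh x.1 ∧ y.2 = hh y.1) :=
  ch_rel_of_mem_RC (fun x y => x.1 = y.1 ∨ (x.2 = hh x.1 ∧ y.2 = hh y.1))
    (fun _ _ _ _ h => MC_delta_label_cases h) hc hxy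

theorem finalSt_of_finalSt_GWdelta_inl (hwf : ∀ i, (S i).WellFormed)
    (hK : IsConnPolicy S hh CM Kd) {i : I} {q : (S i).St (hh i)}
    (hq : FinalSt (GWdelta S hh Kd i) (.inl q)) : FinalSt ((S i).delta (hh i)) q := by
  rintro ⟨s, r, d, a⟩ q' hδ
  have hsub := (hwf i _ _ hδ).1
  cases d
  · obtain rfl : s = hh i := hsub
    obtain ⟨j, -, -, hKd⟩ := (hK i).1.2 q r a q' hδ
    exact hq _ _ ⟨q, a, q', Or.inl ⟨r, j, hδ, hKd, Or.inl rfl⟩⟩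
  · obtain rfl : r = hh i := hsub
    obtain ⟨j, -, -, hKd⟩ := (hK i).1.1 q s a q' hδ
    exact hq _ _ ⟨q, a, q', Or.inr ⟨s, j, hδ, hKd, Or.inl rfl⟩⟩

/-- Every intermediate state of a gateway is entered by the first half of a forwarding, which
enables the second half. -/
theorem toGW_eq_inl_of_finalSt (hwf : ∀ i, (S i).WellFormed) (hK : IsConnPolicy S hh CM Kd)
    {c : Config (MC S hh Kd)} (hc : c ∈ RC (MC S hh Kd)) {i : I}
    (hfin : FinalSt ((MC S hh Kd).delta ⟨i, hh i⟩) (c.st ⟨i, hh i⟩)) :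
    ∃ q, toGW S hh i (c.st ⟨i, hh i⟩) = .inl q ∧ FinalSt ((S i).delta (hh i)) q := by
  have hgw := hfin.toGW
  cases hg : toGW S hh i (c.st ⟨i, hh i⟩) with
  | inl q => exact ⟨q, rfl, finalSt_of_finalSt_GWdelta_inl hwf hK (hg ▸ hgw)⟩
  | inr t =>
    exfalso
    rcases st_eq_init_or_target_of_mem_RC hc ⟨i, hh i⟩ with hinit | ⟨a, l, hin⟩
    · rw [hinit, toGW_MC_init] at hg; cases hg
    · have hin := mem_MC_delta_gw_iff.1 hin
      rw [hg] at hin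
      obtain ⟨l', g', hout⟩ := exists_mem_GWdelta_of_inr hin
      exact (hg ▸ hgw) l' g' hout

theorem finalSt_sysConfig (hwf : ∀ i, (S i).WellFormed) (hK : IsConnPolicy S hh CM Kd)
    {c : Config (MC S hh Kd)} (hc : c ∈ RC (MC S hh Kd))
    (hfin : ∀ x, FinalSt ((MC S hh Kd).delta x) (c.st x)) (i : I) (p : P i) :
    FinalSt ((S i).delta p) ((sysConfig S hh Kd c i).st p) := by
  by_cases hp : p = hh i
  · subst hp
    obtain ⟨q, hq, hqfin⟩ := toGW_eq_inl_of_finalSt hwf hK hc (hfin _)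
    have hst : (sysConfig S hh Kd c i).st (hh i) = q :=
      (sysState_hh i _).trans (congrArg gwSysState hq)
    rwa [hst]
  · have hst : (sysConfig S hh Kd c i).st p = toLoc S hh hp (c.st ⟨i, p⟩) :=
      sysState_of_ne hp _
    rw [hst]
    exact (hfin _).toLoc hp

theorem finalSt_policyConfig (hwf : ∀ i, (S i).WellFormed) (hK : IsConnPolicy S hh CM Kd)
    {c : Config (MC S hh Kd)} (hc : c ∈ RC (MC S hh Kd))
    (hfin : ∀ x, FinalSt ((MC S hh Kd).delta x) (c.st x)) (i : I) :
    FinalSt ((policyCS S hh Kd).delta i) ((policyConfig S hh Kd c).st i) := by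
  obtain ⟨q, hq, hqfin⟩ := toGW_eq_inl_of_finalSt hwf hK hc (hfin _)
  show FinalSt (Kd i) (gwPolicyState (toGW S hh i (c.st ⟨i, hh i⟩)))
  rw [hq]
  exact hK.finalSt hqfin

end Composition

end CFSM

open CFSM in
theorem orphanFree_preserved_by_multicomposition_general
    {I : Type} {P : I → Type} {A : Type}
    (S : ∀ i, CS (P i) A)
    (hwf : ∀ i, (S i).WellFormed)
    (hh : ∀ i, P i)
    (CM : Set (I × A × I))
    (Kd : ∀ i, Set ((S i).St (hh i) × Act I A × (S i).St (hh i)))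
    (hK : IsConnPolicy S hh CM Kd)
    (hS : ∀ i, OrphanFree (S i))
    (hKfree : OrphanFree (policyCS S hh Kd)) :
    OrphanFree (MC S hh Kd) := by
  rintro c hc ⟨hfin, ⟨i, p⟩, ⟨j, q⟩, hne⟩
  rcases MC_ch_ne_nil_cases hc hne with hij | ⟨hp, hq⟩
  · obtain rfl : i = j := hij
    exact hS i _ (sysConfig_mem_RC hK hc i) ⟨finalSt_sysConfig hwf hK hc hfin i, p, q, hne⟩
  · obtain rfl : p = hh i := hp
    obtain rfl : q = hh j := hq
    exact hKfree _ (policyConfig_mem_RC hwf hc) ⟨finalSt_policyConfig hwf hK hc hfin, i, j, hne⟩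

open CFSM in
/-- PaI multicomposition preserves orphan-message freeness
(no condition on mixed states), provided the connection policy is orphan-message free. -/
theorem orphanFree_preserved_by_multicomposition
    {I : Type} [Finite I] {P : I → Type} [∀ i, Finite (P i)] {A : Type} [Finite A]
    (S : ∀ i, CS (P i) A)
    (hfin : ∀ i p, Finite ((S i).St p))
    (hwf : ∀ i, (S i).WellFormed)
    (hh : ∀ i, P i)
    (CM : Set (I × A × I)) (hCM : IsConnModel S hh CM)
    (Kd : ∀ i, Set ((S i).St (hh i) × Act I A × (S i).St (hh i)))
    (hK : IsConnPolicy S hh CM Kd)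
    (hS : ∀ i, OrphanFree (S i))
    (hKfree : OrphanFree (policyCS S hh Kd)) :
    OrphanFree (MC S hh Kd) :=
  orphanFree_preserved_by_multicomposition_general S hwf hh CM Kd hK hS hKfree
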